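/- Naimark's theorem: given a quantum measurement with POVM elements {M_x}_{x=0}^{M} on C_Γ (positive semidefinite operators summing to the identity), there exist an isometry V : C_Γ → C_{Γ'} and a projective measurement {Π_x}_{x=0}^{M} on C_{Γ'} (orthogonal projectors summing to the identity) such that Tr(M_x ρ) = Tr(Π_x V ρ V†) for every density matrix ρ on C_Γ and every outcome x. In particular, for the embedding V = I_Γ ⊗ |0⟩_E into C_Γ ⊗ C_E, the POVM elements are recovered as M_x = (I_Γ ⊗ ⟨0|_E) Π_x (I_Γ ⊗ |0⟩_E). -/

import Mathlib

open scoped Matrix Kronecker ComplexOrder Classical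
open Filter

noncomputable section

namespace QI

/-! ### Basic objects: states, entropy, partial traces -/

/-- The outer product `|v⟩⟨v|` of a vector with itself. -/
def proj {n : Type*} (v : n → ℂ) : Matrix n n ℂ :=
  Matrix.of fun i j => v i * star (v j)

/-- The tensor product of two vectors. -/
def tensorVec {A B : Type*} (u : A → ℂ) (v : B → ℂ) : A × B → ℂ :=
  fun p => u p.1 * v p.2

/-- A unit (normalized) vector. -/
def UnitVec {n : Type*} [Fintype n] (v : n → ℂ) : Prop :=
  ∑ i, star (v i) * v i = 1

/-- A density matrix: positive semidefinite (hence Hermitian) with unit trace. -/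
def IsDensityMatrix {n : Type*} [Fintype n] (ρ : Matrix n n ℂ) : Prop :=
  ρ.PosSemidef ∧ ρ.trace = 1

/-- A pure state: a rank-one projector onto a unit vector. -/
def IsPure {n : Type*} [Fintype n] (ρ : Matrix n n ℂ) : Prop :=
  ∃ v : n → ℂ, UnitVec v ∧ ρ = proj v

/-- The von Neumann entropy (base 2), `S(ρ) = -Tr[ρ log₂ ρ] = -∑ λᵢ log₂ λᵢ`. -/
def entropy {n : Type*} [Fintype n] [DecidableEq n] (ρ : Matrix n n ℂ) : ℝ :=
  if h : ρ.IsHermitian then -∑ i, h.eigenvalues i * Real.logb 2 (h.eigenvalues i) else 0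

/-- The Shannon entropy of a probability distribution. -/
def shannonEntropy {X : Type*} [Fintype X] (p : X → ℝ) : ℝ :=
  -∑ x, p x * Real.logb 2 (p x)

/-- Partial trace over the second tensor factor. -/
def trB {A B : Type*} [Fintype A] [Fintype B] (ρ : Matrix (A × B) (A × B) ℂ) :
    Matrix A A ℂ :=
  Matrix.of fun a a' => ∑ b, ρ (a, b) (a', b)

/-- Partial trace over the first tensor factor. -/
def trA {A B : Type*} [Fintype A] [Fintype B] (ρ : Matrix (A × B) (A × B) ℂ) :
    Matrix B B ℂ :=
  Matrix.of fun b b' => ∑ a, ρ (a, b) (a, b')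

/-- For a tripartite state on `A × B × E`, the partial trace over the middle factor `B`. -/
def trB3 {A B E : Type*} [Fintype A] [Fintype B] [Fintype E]
    (ρ : Matrix (A × B × E) (A × B × E) ℂ) : Matrix (A × E) (A × E) ℂ :=
  Matrix.of fun p q => ∑ b, ρ (p.1, b, p.2) (q.1, b, q.2)

/-- For a tripartite state on `A × B × E`, the partial trace over the last factor `E`. -/
def trE3 {A B E : Type*} [Fintype A] [Fintype B] [Fintype E]
    (ρ : Matrix (A × B × E) (A × B × E) ℂ) : Matrix (A × B) (A × B) ℂ :=
  Matrix.of fun p q => ∑ e, ρ (p.1, p.2, e) (q.1, q.2, e)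

/-- Quantum mutual information `I(A:B) = S(ρ_A) + S(ρ_B) - S(ρ_AB)`. -/
def mutualInfo {A B : Type*} [Fintype A] [DecidableEq A] [Fintype B] [DecidableEq B]
    (ρ : Matrix (A × B) (A × B) ℂ) : ℝ :=
  entropy (trB ρ) + entropy (trA ρ) - entropy ρ

/-- Quantum conditional entropy `S(A|B) = S(ρ_AB) - S(ρ_B)`. -/
def condEnt {A B : Type*} [Fintype A] [DecidableEq A] [Fintype B] [DecidableEq B]
    (ρ : Matrix (A × B) (A × B) ℂ) : ℝ :=
  entropy ρ - entropy (trA ρ)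

/-- Coherent information `I(A⟩B) = -S(A|B) = S(ρ_B) - S(ρ_AB)`. -/
def cohInfo {A B : Type*} [Fintype A] [DecidableEq A] [Fintype B] [DecidableEq B]
    (ρ : Matrix (A × B) (A × B) ℂ) : ℝ :=
  entropy (trA ρ) - entropy ρ

/-! ### Measurements, classical correlations, discord -/

/-- Post-measurement state `∑ₓ Tr_B[(I ⊗ Mₓ)ρ] ⊗ |x⟩⟨x|` of a local POVM `{Mₓ}` on `B`. -/
def postMeas {A B : Type*} [Fintype A] [DecidableEq A] [Fintype B] [DecidableEq B] {m : ℕ}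
    (M : Fin m → Matrix B B ℂ) (ρ : Matrix (A × B) (A × B) ℂ) :
    Matrix (A × Fin m) (A × Fin m) ℂ :=
  Matrix.of fun p q =>
    if p.2 = q.2 then trB (((1 : Matrix A A ℂ) ⊗ₖ M p.2) * ρ) p.1 q.1 else 0

/-- Classical correlations `J(A:B) = sup` over local POVM measurements on `B` of the
mutual information of the post-measurement state. -/
def classicalCorr {A B : Type*} [Fintype A] [DecidableEq A] [Fintype B] [DecidableEq B]
    (ρ : Matrix (A × B) (A × B) ℂ) : ℝ :=
  sSup { r | ∃ (m : ℕ) (M : Fin m → Matrix B B ℂ),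
    (∀ x, (M x).PosSemidef) ∧ (∑ x, M x = 1) ∧ r = mutualInfo (postMeas M ρ) }

/-- Quantum discord `D(A:B) = I(A:B) - J(A:B)` (measurement on the second subsystem). -/
def discord {A B : Type*} [Fintype A] [DecidableEq A] [Fintype B] [DecidableEq B]
    (ρ : Matrix (A × B) (A × B) ℂ) : ℝ :=
  mutualInfo ρ - classicalCorr ρ

/-! ### Entanglement measures -/

/-- Entanglement of formation: the minimum average entanglement entropy over pure-state
ensembles realizing `ρ`. -/
def eof {A B : Type*} [Fintype A] [DecidableEq A] [Fintype B] [DecidableEq B]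
    (ρ : Matrix (A × B) (A × B) ℂ) : ℝ :=
  sInf { r | ∃ (m : ℕ) (p : Fin m → ℝ) (ψ : Fin m → (A × B → ℂ)),
    (∀ i, 0 ≤ p i) ∧ (∑ i, p i = 1) ∧ (∀ i, UnitVec (ψ i)) ∧
    ρ = ∑ i, (p i : ℂ) • proj (ψ i) ∧
    r = ∑ i, p i * entropy (trB (proj (ψ i))) }

/-- Separable states: convex combinations of product states. -/
def IsSeparable {A B : Type*} [Fintype A] [Fintype B]
    (ρ : Matrix (A × B) (A × B) ℂ) : Prop :=
  ∃ (m : ℕ) (p : Fin m → ℝ) (σA : Fin m → Matrix A A ℂ) (σB : Fin m → Matrix B B ℂ),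
    (∀ i, 0 ≤ p i) ∧ (∑ i, p i = 1) ∧ (∀ i, IsDensityMatrix (σA i)) ∧
    (∀ i, IsDensityMatrix (σB i)) ∧ ρ = ∑ i, (p i : ℂ) • (σA i ⊗ₖ σB i)

/-- The `k`-fold tensor power of a bipartite state, with tensor factors regrouped as
`(A^k) × (B^k)`. -/
def pow {A B : Type*} [Fintype A] [Fintype B] (ρ : Matrix (A × B) (A × B) ℂ) (k : ℕ) :
    Matrix ((Fin k → A) × (Fin k → B)) ((Fin k → A) × (Fin k → B)) ℂ :=
  Matrix.of fun p q => ∏ i, ρ (p.1 i, p.2 i) (q.1 i, q.2 i)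

/-- Regularization `lim_{k → ∞} f k / k`. -/
def regularize (f : ℕ → ℝ) : ℝ :=
  limUnder atTop fun k : ℕ => f k / k

/-- Entanglement cost: the regularized entanglement of formation. -/
def entCost {A B : Type*} [Fintype A] [DecidableEq A] [Fintype B] [DecidableEq B]
    (ρ : Matrix (A × B) (A × B) ℂ) : ℝ :=
  regularize fun k => eof (pow ρ k)

/-- Regularized quantum discord. -/
def regDiscord {A B : Type*} [Fintype A] [DecidableEq A] [Fintype B] [DecidableEq B]
    (ρ : Matrix (A × B) (A × B) ℂ) : ℝ :=
  regularize fun k => discord (pow ρ k)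

/-- An LOCC (modelled as separable-Kraus) quantum channel between bipartite systems:
all Kraus operators are of local product form. -/
def IsLOCCChannel {A B : Type*} [Fintype A] [DecidableEq A] [Fintype B] [DecidableEq B]
    {a b : ℕ} (Λ : Matrix (A × B) (A × B) ℂ → Matrix (Fin a × Fin b) (Fin a × Fin b) ℂ) :
    Prop :=
  ∃ (m : ℕ) (L : Fin m → Matrix (Fin a) A ℂ) (R : Fin m → Matrix (Fin b) B ℂ),
    (∑ k, (L k ⊗ₖ R k)ᴴ * (L k ⊗ₖ R k) = 1) ∧
    ∀ ρ, Λ ρ = ∑ k, (L k ⊗ₖ R k) * ρ * (L k ⊗ₖ R k)ᴴ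

/-- Distillable entanglement: the regularized coherent information optimized over LOCC
operations on the copies. -/
def distEnt {A B : Type*} [Fintype A] [DecidableEq A] [Fintype B] [DecidableEq B]
    (ρ : Matrix (A × B) (A × B) ℂ) : ℝ :=
  limUnder atTop fun k : ℕ =>
    (sSup { r | ∃ (a b : ℕ)
        (Λ : Matrix ((Fin k → A) × (Fin k → B)) ((Fin k → A) × (Fin k → B)) ℂ →
          Matrix (Fin a × Fin b) (Fin a × Fin b) ℂ),
        IsLOCCChannel Λ ∧ r = cohInfo (Λ (pow ρ k)) }) / k

/-! ### Orthonormal families, dephasings, relative entropy -/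

/-- A family of vectors is orthonormal. -/
def OrthonormalFam {ι n : Type*} [Fintype n] [DecidableEq ι] (v : ι → n → ℂ) : Prop :=
  ∀ i j, (∑ x, star (v i x) * v j x) = if i = j then (1 : ℂ) else 0

/-- The Hermitian functional calculus of `log₂` (with the convention `log₂ 0 = 0`),
used to define `Tr[ρ log₂ σ]`. -/
def hermLog {n : Type*} [Fintype n] [DecidableEq n] (M : Matrix n n ℂ) : Matrix n n ℂ :=
  if h : M.IsHermitian then
    (h.eigenvectorUnitary : Matrix n n ℂ) *
      Matrix.diagonal (fun i => (Real.logb 2 (h.eigenvalues i) : ℂ)) *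
      (star (h.eigenvectorUnitary : Matrix n n ℂ))
  else 0

/-- Quantum relative entropy `S(ρ‖σ) = Tr[ρ log₂ ρ - ρ log₂ σ]`. -/
def relEnt {n : Type*} [Fintype n] [DecidableEq n] (ρ σ : Matrix n n ℂ) : ℝ :=
  ((ρ * hermLog ρ - ρ * hermLog σ).trace).re

/-- Local dephasing of the second subsystem in the orthonormal basis `e`. -/
def dephB {A B : Type*} [Fintype A] [DecidableEq A] [Fintype B] [DecidableEq B]
    (e : B → B → ℂ) (ρ : Matrix (A × B) (A × B) ℂ) : Matrix (A × B) (A × B) ℂ :=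
  ∑ k, ((1 : Matrix A A ℂ) ⊗ₖ proj (e k)) * ρ * ((1 : Matrix A A ℂ) ⊗ₖ proj (e k))

/-- Local dephasing of both subsystems in the orthonormal bases `a` and `b`. -/
def dephAB {A B : Type*} [Fintype A] [DecidableEq A] [Fintype B] [DecidableEq B]
    (a : A → A → ℂ) (b : B → B → ℂ) (ρ : Matrix (A × B) (A × B) ℂ) :
    Matrix (A × B) (A × B) ℂ :=
  ∑ k, ∑ l, (proj (a k) ⊗ₖ proj (b l)) * ρ * (proj (a k) ⊗ₖ proj (b l))

/-- One-way work deficit: minimum entropy production over complete local dephasings of `B`. -/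
def oneWayDeficit {A B : Type*} [Fintype A] [DecidableEq A] [Fintype B] [DecidableEq B]
    (ρ : Matrix (A × B) (A × B) ℂ) : ℝ :=
  sInf { r | ∃ e : B → B → ℂ, OrthonormalFam e ∧ r = entropy (dephB e ρ) - entropy ρ }

/-- Zero-way work deficit: minimum entropy production over complete local dephasings of
both subsystems. -/
def zeroWayDeficit {A B : Type*} [Fintype A] [DecidableEq A] [Fintype B] [DecidableEq B]
    (ρ : Matrix (A × B) (A × B) ℂ) : ℝ :=
  sInf { r | ∃ (a : A → A → ℂ) (b : B → B → ℂ), OrthonormalFam a ∧ OrthonormalFam b ∧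
    r = entropy (dephAB a b ρ) - entropy ρ }

/-- Quantum-classical states `∑ₖ pₖ ρₖ ⊗ |eₖ⟩⟨eₖ|`. -/
def IsQCState {A B : Type*} [Fintype A] [Fintype B] [DecidableEq B]
    (σ : Matrix (A × B) (A × B) ℂ) : Prop :=
  ∃ (e : B → B → ℂ) (p : B → ℝ) (ρk : B → Matrix A A ℂ),
    OrthonormalFam e ∧ (∀ k, 0 ≤ p k) ∧ (∑ k, p k = 1) ∧
    (∀ k, IsDensityMatrix (ρk k)) ∧ σ = ∑ k, (p k : ℂ) • (ρk k ⊗ₖ proj (e k))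

/-- Classical-classical (strictly classically correlated) states
`∑ₖⱼ p_{kj} |aₖ⟩⟨aₖ| ⊗ |bⱼ⟩⟨bⱼ|`. -/
def IsCCState {A B : Type*} [Fintype A] [DecidableEq A] [Fintype B] [DecidableEq B]
    (ρ : Matrix (A × B) (A × B) ℂ) : Prop :=
  ∃ (a : A → A → ℂ) (b : B → B → ℂ) (p : A → B → ℝ),
    OrthonormalFam a ∧ OrthonormalFam b ∧ (∀ k j, 0 ≤ p k j) ∧
    (∑ k, ∑ j, p k j) = 1 ∧
    ρ = ∑ k, ∑ j, (p k j : ℂ) • proj (tensorVec (a k) (b j))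

/-- Relative entropy of quantumness w.r.t. quantum-classical states. -/
def relEntQuantumnessQC {A B : Type*} [Fintype A] [DecidableEq A] [Fintype B] [DecidableEq B]
    (ρ : Matrix (A × B) (A × B) ℂ) : ℝ :=
  sInf { r | ∃ σ : Matrix (A × B) (A × B) ℂ, IsQCState σ ∧ r = relEnt ρ σ }

/-- Relative entropy of quantumness w.r.t. classical-classical states. -/
def relEntQuantumnessCC {A B : Type*} [Fintype A] [DecidableEq A] [Fintype B] [DecidableEq B]
    (ρ : Matrix (A × B) (A × B) ℂ) : ℝ :=
  sInf { r | ∃ σ : Matrix (A × B) (A × B) ℂ, IsCCState σ ∧ r = relEnt ρ σ }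

/-- Relative entropy of entanglement: minimal relative entropy to a separable state. -/
def relEntEntanglement {A B : Type*} [Fintype A] [DecidableEq A] [Fintype B] [DecidableEq B]
    (ρ : Matrix (A × B) (A × B) ℂ) : ℝ :=
  sInf { r | ∃ σ : Matrix (A × B) (A × B) ℂ, IsSeparable σ ∧ r = relEnt ρ σ }

/-! ### The activation protocol -/

/-- The reference vector `|0⟩`. -/
def ket0 (a : ℕ) [NeZero a] : Fin a → ℂ := fun i => if i = 0 then 1 else 0

/-- The generalized CNOT (copy) gate `|k⟩|m⟩ ↦ |k⟩|m + k⟩` on `Fin a × Fin a`. -/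
def cnot (a : ℕ) : Matrix (Fin a × Fin a) (Fin a × Fin a) ℂ :=
  Matrix.of fun p q => if p.1 = q.1 ∧ p.2 = q.2 + q.1 then 1 else 0

/-- The tensor product `U_{A:M_A} ⊗ U_{B:M_B}` of two two-party operators, with the
global tensor factors grouped as `(A × B) × (M_A × M_B)` (system : apparatus). -/
def pairKron {α α' β β' : Type*} (UA : Matrix (α × α') (α × α') ℂ)
    (UB : Matrix (β × β') (β × β') ℂ) :
    Matrix ((α × β) × (α' × β')) ((α × β) × (α' × β')) ℂ :=
  Matrix.of fun p q => UA (p.1.1, p.2.1) (q.1.1, q.2.1) * UB (p.1.2, p.2.2) (q.1.2, q.2.2)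

/-- A measurement-interaction unitary on system ⊗ apparatus, acting as
`|k⟩|0⟩ ↦ |k⟩|k⟩` on some orthonormal basis `e` (the copies `f k` being orthonormal). -/
def IsCopyUnitary {n : Type*} [Fintype n] [DecidableEq n]
    (U : Matrix (n × n) (n × n) ℂ) (ref : n → ℂ) : Prop :=
  U ∈ Matrix.unitaryGroup (n × n) ℂ ∧
  ∃ e f : n → n → ℂ, OrthonormalFam e ∧ OrthonormalFam f ∧
    ∀ k, U.mulVec (tensorVec (e k) ref) = tensorVec (e k) (f k)

/-- The interaction unitary of the activation protocol,
`U_{S:M} = C_{S:M} (U_S ⊗ 1_M)` with `U_S = U_A ⊗ U_B`. -/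
def activationUnitary {a b : ℕ} (UA : Matrix (Fin a) (Fin a) ℂ)
    (UB : Matrix (Fin b) (Fin b) ℂ) :
    Matrix ((Fin a × Fin b) × (Fin a × Fin b)) ((Fin a × Fin b) × (Fin a × Fin b)) ℂ :=
  pairKron (cnot a) (cnot b) *
    ((UA ⊗ₖ UB) ⊗ₖ (1 : Matrix (Fin a × Fin b) (Fin a × Fin b) ℂ))

/-- The post-interaction system : apparatus state
`ρ̃_{S:M} = U_{S:M} (ρ_S ⊗ |0⟩⟨0|_M) U_{S:M}†` of the activation protocol. -/
def activatedState {a b : ℕ} [NeZero a] [NeZero b] (UA : Matrix (Fin a) (Fin a) ℂ)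
    (UB : Matrix (Fin b) (Fin b) ℂ) (ρ : Matrix (Fin a × Fin b) (Fin a × Fin b) ℂ) :
    Matrix ((Fin a × Fin b) × (Fin a × Fin b)) ((Fin a × Fin b) × (Fin a × Fin b)) ℂ :=
  activationUnitary UA UB * (ρ ⊗ₖ proj (tensorVec (ket0 a) (ket0 b))) *
    (activationUnitary UA UB)ᴴ

/-- Regroup a `(Fin a × Fin b) × (Fin a × Fin b)` matrix as a
`Fin (a*b) × Fin (a*b)` bipartite matrix. -/
def reindexSM {a b : ℕ} (ρ : Matrix ((Fin a × Fin b) × (Fin a × Fin b))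
    ((Fin a × Fin b) × (Fin a × Fin b)) ℂ) :
    Matrix (Fin (a * b) × Fin (a * b)) (Fin (a * b) × Fin (a * b)) ℂ :=
  Matrix.reindex (Equiv.prodCongr finProdFinEquiv finProdFinEquiv)
    (Equiv.prodCongr finProdFinEquiv finProdFinEquiv) ρ

/-- A maximally correlated state `∑_{ij} c_{ij} |i⟩⟨j| ⊗ |i⟩⟨j|`. -/
def maxCorr {n : Type*} [Fintype n] [DecidableEq n] (c : n → n → ℂ) :
    Matrix (n × n) (n × n) ℂ :=
  Matrix.of fun p q => if p.1 = p.2 ∧ q.1 = q.2 then c p.1 q.1 else 0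

/-! ### CLOCC operations -/

/-- The closed set of local operations and classical communication, generated by local
unitaries, local dephasings, addition of local pure ancillas, communication of a
(dephased) subsystem, and relabellings. -/
inductive CLOCC :
    ∀ (A B A' B' : Type), (Matrix (A × B) (A × B) ℂ → Matrix (A' × B') (A' × B') ℂ) → Prop
  | localUnitary {A B : Type} [Fintype A] [DecidableEq A] [Fintype B] [DecidableEq B]
      (UA : Matrix A A ℂ) (UB : Matrix B B ℂ)
      (_ : UA ∈ Matrix.unitaryGroup A ℂ) (_ : UB ∈ Matrix.unitaryGroup B ℂ) :
      CLOCC A B A B fun ρ => (UA ⊗ₖ UB) * ρ * (UA ⊗ₖ UB)ᴴ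
  | dephasingA {A B : Type} [Fintype A] [DecidableEq A] [Fintype B] [DecidableEq B]
      (e : A → A → ℂ) (_ : OrthonormalFam e) :
      CLOCC A B A B fun ρ =>
        ∑ k, (proj (e k) ⊗ₖ (1 : Matrix B B ℂ)) * ρ * (proj (e k) ⊗ₖ (1 : Matrix B B ℂ))
  | dephasingB {A B : Type} [Fintype A] [DecidableEq A] [Fintype B] [DecidableEq B]
      (e : B → B → ℂ) (_ : OrthonormalFam e) :
      CLOCC A B A B fun ρ =>
        ∑ k, ((1 : Matrix A A ℂ) ⊗ₖ proj (e k)) * ρ * ((1 : Matrix A A ℂ) ⊗ₖ proj (e k))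
  | ancillaA {A B C : Type} [Fintype C] (v : C → ℂ) (_ : UnitVec v) :
      CLOCC A B (A × C) B fun ρ =>
        Matrix.of fun p q => ρ (p.1.1, p.2) (q.1.1, q.2) * (v p.1.2 * star (v q.1.2))
  | ancillaB {A B C : Type} [Fintype C] (v : C → ℂ) (_ : UnitVec v) :
      CLOCC A B A (B × C) fun ρ =>
        Matrix.of fun p q => ρ (p.1, p.2.1) (q.1, q.2.1) * (v p.2.2 * star (v q.2.2))
  | commBtoA {A B₁ B₂ : Type} [Fintype A] [DecidableEq A] [Fintype B₁] [DecidableEq B₁]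
      [Fintype B₂] [DecidableEq B₂] (e : B₂ → B₂ → ℂ) (_ : OrthonormalFam e) :
      CLOCC A (B₁ × B₂) (A × B₂) B₁ fun ρ => Matrix.of fun p q =>
        (∑ k, ((1 : Matrix A A ℂ) ⊗ₖ ((1 : Matrix B₁ B₁ ℂ) ⊗ₖ proj (e k))) * ρ *
            ((1 : Matrix A A ℂ) ⊗ₖ ((1 : Matrix B₁ B₁ ℂ) ⊗ₖ proj (e k))))
          (p.1.1, (p.2, p.1.2)) (q.1.1, (q.2, q.1.2))
  | commAtoB {A₁ A₂ B : Type} [Fintype A₁] [DecidableEq A₁] [Fintype A₂] [DecidableEq A₂]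
      [Fintype B] [DecidableEq B] (e : A₂ → A₂ → ℂ) (_ : OrthonormalFam e) :
      CLOCC (A₁ × A₂) B A₁ (B × A₂) fun ρ => Matrix.of fun p q =>
        (∑ k, (((1 : Matrix A₁ A₁ ℂ) ⊗ₖ proj (e k)) ⊗ₖ (1 : Matrix B B ℂ)) * ρ *
            (((1 : Matrix A₁ A₁ ℂ) ⊗ₖ proj (e k)) ⊗ₖ (1 : Matrix B B ℂ)))
          ((p.1, p.2.2), p.2.1) ((q.1, q.2.2), q.2.1)
  | relabel {A B A' B' : Type} (eA : A ≃ A') (eB : B ≃ B') :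
      CLOCC A B A' B' fun ρ =>
        Matrix.reindex (Equiv.prodCongr eA eB) (Equiv.prodCongr eA eB) ρ
  | comp {A B C D E F : Type}
      {Λ : Matrix (A × B) (A × B) ℂ → Matrix (C × D) (C × D) ℂ}
      {Γ : Matrix (C × D) (C × D) ℂ → Matrix (E × F) (E × F) ℂ} :
      CLOCC A B C D Λ → CLOCC C D E F Γ → CLOCC A B E F (Γ ∘ Λ)

/-- The work deficit `Δ(ρ_AB) = inf_{Γ ∈ CLOCC} S(Γ[ρ_AB]) - S(ρ_AB)`. -/
def workDeficit {A B : Type} [Fintype A] [DecidableEq A] [Fintype B] [DecidableEq B]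
    (ρ : Matrix (A × B) (A × B) ℂ) : ℝ :=
  sInf { r | ∃ (a' b' : ℕ)
    (Γ : Matrix (A × B) (A × B) ℂ → Matrix (Fin a' × Fin b') (Fin a' × Fin b') ℂ),
    CLOCC A B (Fin a') (Fin b') Γ ∧ r = entropy (Γ ρ) - entropy ρ }

/-! ### Channels acting on one side -/

/-- The ampliation `id_A ⊗ Φ` of a map `Φ` on the second tensor factor. -/
def ampliate {A B B' : Type*} [Fintype B] (Φ : Matrix B B ℂ → Matrix B' B' ℂ)
    (ρ : Matrix (A × B) (A × B) ℂ) : Matrix (A × B') (A × B') ℂ :=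
  Matrix.of fun p q => Φ (Matrix.of fun b b' => ρ (p.1, b) (q.1, b')) p.2 q.2

/-- The isometric embedding `V = 1_Γ ⊗ |0⟩ : C_Γ → C_Γ ⊗ C_E`. -/
def embed {Γ : Type*} [DecidableEq Γ] (e : ℕ) : Matrix (Γ × Fin (e + 1)) Γ ℂ :=
  Matrix.of fun p g => if p.1 = g ∧ p.2 = 0 then 1 else 0

/-!
Write each `M x` as `B xᴴ * B x`. Stacking the blocks `B x` gives an isometry
`W : ℂ^Γ → ℂ^Γ ⊗ ℂ^X` with `Wᴴ (1 ⊗ |x⟩⟨x|) W = M x`. Extend `W` to a unitary `U` of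
`ℂ^Γ ⊗ ℂ^X` agreeing with `W` on `ℂ^Γ ⊗ |x₀⟩`; then `Πₓ = Uᴴ (1 ⊗ |x⟩⟨x|) U` is a projective
measurement with `M x = (1 ⊗ ⟨x₀|) Πₓ (1 ⊗ |x₀⟩)`, and the trace identity is cyclicity of the
trace.
-/

structure IsProjectiveMeasurement {N X : Type*} [Fintype N] [DecidableEq N] [Fintype X]
    (P : X → Matrix N N ℂ) : Prop where
  conjTranspose_eq : ∀ x, (P x)ᴴ = P x
  mul_self : ∀ x, P x * P x = P x
  mul_eq_zero : ∀ x y, x ≠ y → P x * P y = 0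
  sum_eq_one : ∑ x, P x = 1

section ProjectiveMeasurement

variable {N N' X : Type*} [Fintype N] [DecidableEq N] [Fintype N'] [DecidableEq N'] [Fintype X]

theorem isProjectiveMeasurement_diagonal_indicator (f : N → X) :
    IsProjectiveMeasurement fun x => Matrix.diagonal fun p => if f p = x then (1 : ℂ) else 0 where
  conjTranspose_eq x := by
    rw [Matrix.diagonal_conjTranspose]
    congr 1
    ext p
    split_ifs <;> simp_all
  mul_self x := by
    rw [Matrix.diagonal_mul_diagonal]
    congr 1
    ext p
    split_ifs <;> simp
  mul_eq_zero x y hxy := by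
    rw [Matrix.diagonal_mul_diagonal, ← Matrix.diagonal_zero]
    congr 1
    ext p
    split_ifs with hx hy <;> simp_all
  sum_eq_one := by
    ext p q
    simp [Matrix.sum_apply, Matrix.diagonal_apply, Matrix.one_apply]

theorem IsProjectiveMeasurement.conj_unitary {P : X → Matrix N N ℂ}
    (hP : IsProjectiveMeasurement P) {U : Matrix N N ℂ} (hU : U ∈ Matrix.unitaryGroup N ℂ) :
    IsProjectiveMeasurement fun x => Uᴴ * P x * U := by
  have hUU : U * Uᴴ = 1 := Matrix.mem_unitaryGroup_iff.mp hU
  have hconj : ∀ x y, (Uᴴ * P x * U) * (Uᴴ * P y * U) = Uᴴ * (P x * P y) * U := fun x y => by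
    simp only [Matrix.mul_assoc, ← Matrix.mul_assoc U, hUU, Matrix.one_mul]
  refine ⟨fun x => ?_, fun x => ?_, fun x y hxy => ?_, ?_⟩
  · simp [Matrix.conjTranspose_mul, hP.conjTranspose_eq x, Matrix.mul_assoc]
  · rw [hconj, hP.mul_self]
  · rw [hconj, hP.mul_eq_zero x y hxy, Matrix.mul_zero, Matrix.zero_mul]
  · rw [← Finset.sum_mul, ← Finset.mul_sum, hP.sum_eq_one, Matrix.mul_one]
    exact Matrix.mem_unitaryGroup_iff'.mp hU

theorem IsProjectiveMeasurement.submatrix {P : X → Matrix N N ℂ}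
    (hP : IsProjectiveMeasurement P) (κ : N' ≃ N) :
    IsProjectiveMeasurement fun x => (P x).submatrix κ κ := by
  refine ⟨fun x => ?_, fun x => ?_, fun x y hxy => ?_, ?_⟩
  · rw [Matrix.conjTranspose_submatrix, hP.conjTranspose_eq]
  · rw [Matrix.submatrix_mul_equiv, hP.mul_self]
  · rw [Matrix.submatrix_mul_equiv, hP.mul_eq_zero x y hxy, Matrix.submatrix_zero]
    rfl
  · have hsum : ∑ x, (P x).submatrix κ κ = (∑ x, P x).submatrix κ κ := by
      ext p q
      simp [Matrix.sum_apply]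
    rw [hsum, hP.sum_eq_one, Matrix.submatrix_one_equiv]

end ProjectiveMeasurement

theorem conjTranspose_submatrix_mul_submatrix_mul_submatrix {N N' Γ : Type*} [Fintype N]
    [Fintype N'] (V : Matrix N Γ ℂ) (A : Matrix N N ℂ) (κ : N' ≃ N) :
    (V.submatrix κ id)ᴴ * A.submatrix κ κ * V.submatrix κ id = Vᴴ * A * V := by
  rw [Matrix.conjTranspose_submatrix, Matrix.submatrix_mul_equiv, Matrix.submatrix_mul_equiv,
    Matrix.submatrix_id_id]

theorem trace_conjTranspose_mul_mul_mul {N Γ : Type*} [Fintype N] [Fintype Γ]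
    (V : Matrix N Γ ℂ) (A : Matrix N N ℂ) (ρ : Matrix Γ Γ ℂ) :
    (Vᴴ * A * V * ρ).trace = (A * (V * ρ * Vᴴ)).trace := by
  simp only [Matrix.mul_assoc]
  rw [Matrix.trace_mul_comm]
  simp only [Matrix.mul_assoc]

theorem exists_mem_unitaryGroup_submatrix_eq {N G : Type*} [Fintype N] [DecidableEq N]
    [Fintype G] [DecidableEq G] (W : Matrix N G ℂ) (hW : Wᴴ * W = 1) {j : G → N}
    (hj : Function.Injective j) :
    ∃ U ∈ Matrix.unitaryGroup N ℂ, U.submatrix id j = W := by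
  let col : G → EuclideanSpace ℂ N := fun g => WithLp.toLp 2 fun p => W p g
  have hcol : Orthonormal ℂ col := by
    rw [orthonormal_iff_ite]
    intro g g'
    simpa [col, Matrix.mul_apply, Matrix.one_apply, PiLp.inner_apply, mul_comm] using
      congrFun (congrFun hW g) g'
  have hrestrict : (Set.range j).domRestrict (Function.extend j col 0) =
      col ∘ (Equiv.ofInjective j hj).symm := by
    ext ⟨_, g, rfl⟩ : 1
    simp [Set.domRestrict_apply, hj.extend_apply]
  obtain ⟨b, hb⟩ := Orthonormal.exists_orthonormalBasis_extension_of_card_eq (𝕜 := ℂ)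
    (by simp) (hrestrict ▸ hcol.comp _ (Equiv.injective _))
  refine ⟨(EuclideanSpace.basisFun N ℂ).toBasis.toMatrix b,
    (EuclideanSpace.basisFun N ℂ).toMatrix_orthonormalBasis_mem_unitary b, ?_⟩
  ext p g
  simp [Module.Basis.toMatrix_apply, hb (j g) ⟨g, rfl⟩, hj.extend_apply, col]

theorem exists_isProjectiveMeasurement_of_isometry {N Γ X : Type*} [Fintype N] [DecidableEq N]
    [Fintype Γ] [DecidableEq Γ] [Fintype X] (W : Matrix N Γ ℂ) (hW : Wᴴ * W = 1)
    {D : X → Matrix N N ℂ} (hD : IsProjectiveMeasurement D) {j : Γ → N}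
    (hj : Function.Injective j) :
    ∃ P : X → Matrix N N ℂ, IsProjectiveMeasurement P ∧ ∀ x,
      ((1 : Matrix N N ℂ).submatrix id j)ᴴ * P x * (1 : Matrix N N ℂ).submatrix id j =
        Wᴴ * D x * W := by
  obtain ⟨U, hU, hUW⟩ := exists_mem_unitaryGroup_submatrix_eq W hW hj
  have hUj : U * (1 : Matrix N N ℂ).submatrix id j = W := by
    rw [← hUW]
    exact Matrix.mul_submatrix_one (Equiv.refl N) j U
  refine ⟨fun x => Uᴴ * D x * U, hD.conj_unitary hU, fun x => ?_⟩
  rw [← hUj, Matrix.conjTranspose_mul]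
  simp only [Matrix.mul_assoc]

def blockColumn {K Γ X : Type*} (B : X → Matrix K Γ ℂ) : Matrix (K × X) Γ ℂ :=
  Matrix.of fun p g => B p.2 p.1 g

section blockColumn

variable {K Γ X : Type*} [Fintype K] [DecidableEq K] [Fintype X] (B : X → Matrix K Γ ℂ)

theorem blockColumn_conjTranspose_mul_diagonal_mul (x : X) :
    (blockColumn B)ᴴ * Matrix.diagonal (fun p : K × X => if p.2 = x then (1 : ℂ) else 0) *
      blockColumn B = (B x)ᴴ * B x := by
  ext g g'
  rw [Matrix.mul_apply]
  simp only [Matrix.mul_diagonal, Matrix.of_apply, Matrix.conjTranspose_apply, blockColumn,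
    Fintype.sum_prod_type]
  rw [Finset.sum_comm]
  simp [Matrix.mul_apply]

theorem blockColumn_conjTranspose_mul_self :
    (blockColumn B)ᴴ * blockColumn B = ∑ x, (B x)ᴴ * B x := by
  calc (blockColumn B)ᴴ * blockColumn B
      = (blockColumn B)ᴴ *
          (∑ x, Matrix.diagonal fun p : K × X => if p.2 = x then (1 : ℂ) else 0) *
          blockColumn B := by
        rw [(isProjectiveMeasurement_diagonal_indicator Prod.snd).sum_eq_one, Matrix.mul_one]
    _ = ∑ x, (B x)ᴴ * B x := by
        rw [Matrix.mul_sum, Matrix.sum_mul]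
        simp only [blockColumn_conjTranspose_mul_diagonal_mul]

end blockColumn

theorem exists_isProjectiveMeasurement_conj_eq_of_posSemidef {Γ X : Type*} [Fintype Γ]
    [DecidableEq Γ] [Fintype X] {M : X → Matrix Γ Γ ℂ} (hpos : ∀ x, (M x).PosSemidef)
    (hsum : ∑ x, M x = 1) (x₀ : X) :
    ∃ P : X → Matrix (Γ × X) (Γ × X) ℂ, IsProjectiveMeasurement P ∧ ∀ x,
      M x = ((1 : Matrix (Γ × X) (Γ × X) ℂ).submatrix id (·, x₀))ᴴ * P x *
        (1 : Matrix (Γ × X) (Γ × X) ℂ).submatrix id (·, x₀) := by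
  have hfactor : ∀ x, ∃ B : Matrix Γ Γ ℂ, M x = Bᴴ * B := fun x => by
    open scoped MatrixOrder in
    exact CStarAlgebra.nonneg_iff_eq_star_mul_self.mp (hpos x).nonneg
  choose B hB using hfactor
  have hW : (blockColumn B)ᴴ * blockColumn B = 1 := by
    rw [blockColumn_conjTranspose_mul_self, ← hsum]
    simp only [hB]
  obtain ⟨P, hP, hPW⟩ := exists_isProjectiveMeasurement_of_isometry _ hW
    (isProjectiveMeasurement_diagonal_indicator Prod.snd) (j := (·, x₀))
    fun _ _ h => congrArg Prod.fst h
  exact ⟨P, hP, fun x => by rw [hPW, blockColumn_conjTranspose_mul_diagonal_mul, hB]⟩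

theorem embed_eq_submatrix {Γ X : Type*} [DecidableEq Γ] (e : ℕ) (σ : Fin (e + 1) ≃ X) :
    embed (Γ := Γ) e = ((1 : Matrix (Γ × X) (Γ × X) ℂ).submatrix id (·, σ 0)).submatrix
      (Equiv.prodCongr (Equiv.refl Γ) σ) id := by
  ext ⟨g', i⟩ g
  simp [embed, Matrix.one_apply]

theorem embed_conjTranspose_mul_self {Γ : Type*} [Fintype Γ] [DecidableEq Γ] (e : ℕ) :
    (embed (Γ := Γ) e)ᴴ * embed (Γ := Γ) e = 1 := by
  ext g g'
  simp [embed, Matrix.mul_apply, Matrix.one_apply, Fintype.sum_prod_type, ite_and, eq_comm]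

theorem exists_isProjectiveMeasurement_embed_conj_eq {Γ X : Type*} [Fintype Γ]
    [DecidableEq Γ] [Fintype X] {M : X → Matrix Γ Γ ℂ} (hpos : ∀ x, (M x).PosSemidef)
    (hsum : ∑ x, M x = 1) :
    ∃ (e : ℕ) (P : X → Matrix (Γ × Fin (e + 1)) (Γ × Fin (e + 1)) ℂ),
      IsProjectiveMeasurement P ∧ ∀ x, M x = (embed (Γ := Γ) e)ᴴ * P x * embed (Γ := Γ) e := by
  rcases isEmpty_or_nonempty Γ with hΓ | hΓ
  · exact ⟨0, 0, ⟨fun _ => Subsingleton.elim _ _, fun _ => Subsingleton.elim _ _,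
      fun _ _ _ => Subsingleton.elim _ _, Subsingleton.elim _ _⟩, fun _ => Subsingleton.elim _ _⟩
  have : Nonempty X := by
    by_contra hX
    rw [not_nonempty_iff] at hX
    simp at hsum
  obtain ⟨e, ⟨σ⟩⟩ : ∃ e, Nonempty (Fin (e + 1) ≃ X) := ⟨_,
    ⟨(Fintype.equivFinOfCardEq (α := X) (Nat.succ_pred_eq_of_pos Fintype.card_pos).symm).symm⟩⟩
  obtain ⟨P, hP, hM⟩ := exists_isProjectiveMeasurement_conj_eq_of_posSemidef hpos hsum (σ 0)
  refine ⟨e, _, hP.submatrix (Equiv.prodCongr (Equiv.refl Γ) σ), fun x => ?_⟩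
  rw [embed_eq_submatrix e σ, conjTranspose_submatrix_mul_submatrix_mul_submatrix, hM]

theorem naimark_general {Γ X : Type*} [Fintype Γ] [DecidableEq Γ] [Fintype X]
    (M : X → Matrix Γ Γ ℂ) (hpos : ∀ x, (M x).PosSemidef) (hsum : ∑ x, M x = 1) :
    (∃ (d : ℕ) (V : Matrix (Fin d) Γ ℂ) (P : X → Matrix (Fin d) (Fin d) ℂ),
      Vᴴ * V = 1 ∧ (∀ x, (P x)ᴴ = P x ∧ P x * P x = P x) ∧
      (∀ x y, x ≠ y → P x * P y = 0) ∧ (∑ x, P x = 1) ∧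
      (∀ x (ρ : Matrix Γ Γ ℂ), IsDensityMatrix ρ →
        (M x * ρ).trace = (P x * (V * ρ * Vᴴ)).trace)) ∧
    (∃ (e : ℕ) (P : X → Matrix (Γ × Fin (e + 1)) (Γ × Fin (e + 1)) ℂ),
      (∀ x, (P x)ᴴ = P x ∧ P x * P x = P x) ∧
      (∀ x y, x ≠ y → P x * P y = 0) ∧ (∑ x, P x = 1) ∧
      (∀ x (ρ : Matrix Γ Γ ℂ), IsDensityMatrix ρ →
        (M x * ρ).trace = (P x * (embed (Γ := Γ) e * ρ * (embed (Γ := Γ) e)ᴴ)).trace) ∧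
      (∀ x, M x = (embed (Γ := Γ) e)ᴴ * P x * embed (Γ := Γ) e)) := by
  obtain ⟨e, P, hP, hM⟩ := exists_isProjectiveMeasurement_embed_conj_eq hpos hsum
  have htrace : ∀ x ρ,
      (M x * ρ).trace = (P x * (embed (Γ := Γ) e * ρ * (embed (Γ := Γ) e)ᴴ)).trace :=
    fun x ρ => by rw [hM x, trace_conjTranspose_mul_mul_mul]
  refine ⟨?_, e, P, fun x => ⟨hP.conjTranspose_eq x, hP.mul_self x⟩, hP.mul_eq_zero,
    hP.sum_eq_one, fun x ρ _ => htrace x ρ, hM⟩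
  let κ := (Fintype.equivFin (Γ × Fin (e + 1))).symm
  refine ⟨_, (embed (Γ := Γ) e).submatrix κ id, fun x => (P x).submatrix κ κ, ?_,
    fun x => ⟨(hP.submatrix κ).conjTranspose_eq x, (hP.submatrix κ).mul_self x⟩,
    (hP.submatrix κ).mul_eq_zero, (hP.submatrix κ).sum_eq_one, fun x ρ _ => ?_⟩
  · rw [Matrix.conjTranspose_submatrix, Matrix.submatrix_mul_equiv, embed_conjTranspose_mul_self,
      Matrix.submatrix_id_id]
  · rw [hM x, ← conjTranspose_submatrix_mul_submatrix_mul_submatrix _ _ κ,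
      trace_conjTranspose_mul_mul_mul]

/-- **Naimark's theorem**: every POVM is realized by a projective
measurement on an enlarged space through an isometry; in particular, for the embedding
`V = 1_Γ ⊗ |0⟩_E`, the POVM elements are recovered as `Mₓ = (1 ⊗ ⟨0|) Πₓ (1 ⊗ |0⟩)`. -/
theorem naimark {Γ X : Type*} [Fintype Γ] [DecidableEq Γ] [Fintype X] [DecidableEq X]
    (M : X → Matrix Γ Γ ℂ) (hpos : ∀ x, (M x).PosSemidef) (hsum : ∑ x, M x = 1) :
    (∃ (d : ℕ) (V : Matrix (Fin d) Γ ℂ) (P : X → Matrix (Fin d) (Fin d) ℂ),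
      Vᴴ * V = 1 ∧ (∀ x, (P x)ᴴ = P x ∧ P x * P x = P x) ∧
      (∀ x y, x ≠ y → P x * P y = 0) ∧ (∑ x, P x = 1) ∧
      (∀ x (ρ : Matrix Γ Γ ℂ), IsDensityMatrix ρ →
        (M x * ρ).trace = (P x * (V * ρ * Vᴴ)).trace)) ∧
    (∃ (e : ℕ) (P : X → Matrix (Γ × Fin (e + 1)) (Γ × Fin (e + 1)) ℂ),
      (∀ x, (P x)ᴴ = P x ∧ P x * P x = P x) ∧
      (∀ x y, x ≠ y → P x * P y = 0) ∧ (∑ x, P x = 1) ∧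
      (∀ x (ρ : Matrix Γ Γ ℂ), IsDensityMatrix ρ →
        (M x * ρ).trace = (P x * (embed (Γ := Γ) e * ρ * (embed (Γ := Γ) e)ᴴ)).trace) ∧
      (∀ x, M x = (embed (Γ := Γ) e)ᴴ * P x * embed (Γ := Γ) e)) :=
  naimark_general M hpos hsum

end QI
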